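/- Let T be a self-adjoint bounded operator on a Hilbert space H with an orthonormal basis {ψ_j} of eigenvectors, T ψ_j = λ_j ψ_j. Then for any continuous bounded function g : ℝ → ℝ and any u ∈ H, the operator g(T) defined by the continuous functional calculus satisfies g(T)u = Σ_j g(λ_j)·⟨u, ψ_j⟩·ψ_j, the series converging in H. -/

import Mathlib

/-!
Each `ψ j` is an eigenvector of `g(T)` with eigenvalue `g (lam j)`: the continuous functions `f` on
the spectrum with `f(T) ψ_j = f(λ_j) ψ_j` form a closed set containing the constants and the
identity and stable under sums and products, hence all of them by Stone–Weierstrass. Applying the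
bounded operator `g(T)` to the expansion `u = Σ ⟪ψ_j, u⟫ ψ_j` gives the series.
-/

open scoped InnerProductSpace

theorem ContinuousLinearMap.mem_spectrum_of_apply_eq_smul {𝕜 E : Type*} [NormedField 𝕜]
    [NormedAddCommGroup E] [NormedSpace 𝕜 E] (T : E →L[𝕜] E) {v : E} (hv : v ≠ 0) {c : 𝕜}
    (hTv : T v = c • v) : c ∈ spectrum 𝕜 T := by
  rintro ⟨u, hu⟩
  have hker : (algebraMap 𝕜 (E →L[𝕜] E) c - T) v = 0 := by
    simp [Algebra.algebraMap_eq_smul_one, hTv]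
  apply hv
  calc v = (u.inv * u) v := by rw [u.inv_val]; rfl
    _ = u.inv ((algebraMap 𝕜 (E →L[𝕜] E) c - T) v) := by rw [hu]; rfl
    _ = 0 := by rw [hker, map_zero]

theorem IsSelfAdjoint.cfc_apply_of_apply_eq_smul {H : Type*} [NormedAddCommGroup H]
    [InnerProductSpace ℂ H] [CompleteSpace H] {T : H →L[ℂ] H} (hT : IsSelfAdjoint T) {v : H}
    (hv : v ≠ 0) {l : ℝ} (hTv : T v = l • v) {g : ℝ → ℝ} (hg : Continuous g) :
    cfc g T v = g l • v := by
  have hl : l ∈ spectrum ℝ T := spectrum.of_algebraMap_mem ℂ <|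
    T.mem_spectrum_of_apply_eq_smul hv (by rw [hTv, algebraMap_smul])
  have key (f : C(spectrum ℝ T, ℝ)) : cfcHom hT f v = f ⟨l, hl⟩ • v := by
    induction f using ContinuousMap.induction_on_of_compact with
    | const r =>
      change cfcHom hT (algebraMap ℝ _ r) v = r • v
      simp [Algebra.algebraMap_eq_smul_one]
    | id => simpa [cfcHom_id hT] using hTv
    | star_id => simpa [cfcHom_id hT] using hTv
    | add f₁ f₂ h₁ h₂ => simp [h₁, h₂, add_smul]
    | mul f₁ f₂ h₁ h₂ => simp [h₁, h₂, mul_smul, smul_comm (f₂ ⟨l, hl⟩)]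
    | frequently f hf =>
      have hcont : Continuous fun f : C(spectrum ℝ T, ℝ) => cfcHom hT f v :=
        (ContinuousLinearMap.apply ℂ H v).continuous.comp (cfcHom_isClosedEmbedding hT).continuous
      exact (isClosed_eq hcont (by fun_prop)).closure_subset (mem_closure_iff_frequently.2 hf)
  rw [cfc_apply g T hT hg.continuousOn]
  exact key _

theorem stmt5_general {H : Type*} [NormedAddCommGroup H] [InnerProductSpace ℂ H] [CompleteSpace H]
    {ι : Type*} (ψ : HilbertBasis ι ℂ H)
    (T : H →L[ℂ] H) (hsa : IsSelfAdjoint T)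
    (lam : ι → ℝ) (heig : ∀ j, T (ψ j) = (lam j : ℂ) • ψ j)
    (g : ℝ → ℝ) (hg : Continuous g)
    (u : H) :
    HasSum (fun j : ι => ((g (lam j) : ℂ)) • (⟪(ψ j : H), u⟫_ℂ • (ψ j : H)))
      ((cfc g T) u) := by
  have hcfc (j : ι) : cfc g T (ψ j) = (g (lam j) : ℂ) • ψ j := by
    rw [hsa.cfc_apply_of_apply_eq_smul (ψ.orthonormal.ne_zero j)
      (by rw [heig, Complex.coe_smul]) hg, Complex.coe_smul]
  convert (ψ.hasSum_repr u).mapL (cfc g T) using 2 with j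
  rw [ψ.repr_apply_apply, map_smul, hcfc, smul_comm]

/-- Spectral representation of the continuous functional calculus: if a bounded self-adjoint
operator `T` on a Hilbert space has an orthonormal (Hilbert) basis `ψ` of eigenvectors with
real eigenvalues `lam j`, then for every continuous bounded `g : ℝ → ℝ` and every `u`,
`g(T) u = Σ_j g(lam j) ⟨u,ψ_j⟩ ψ_j`, the series converging in `H`. -/
theorem stmt5 {H : Type*} [NormedAddCommGroup H] [InnerProductSpace ℂ H] [CompleteSpace H]
    {ι : Type*} (ψ : HilbertBasis ι ℂ H)
    (T : H →L[ℂ] H) (hsa : IsSelfAdjoint T)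
    (lam : ι → ℝ) (heig : ∀ j, T (ψ j) = (lam j : ℂ) • ψ j)
    (g : ℝ → ℝ) (hg : Continuous g) (hgb : ∃ C : ℝ, ∀ s : ℝ, |g s| ≤ C)
    (u : H) :
    HasSum (fun j : ι => ((g (lam j) : ℂ)) • (⟪(ψ j : H), u⟫_ℂ • (ψ j : H)))
      ((cfc g T) u) :=
  stmt5_general ψ T hsa lam heig g hg u
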